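/- The graph G_5, defined on vertex set {u, v, u_1, u_2, u_3, u_4, u_5, z, z_1, z_2} with edges: u and v each adjacent to all of u_1,...,u_5; z adjacent to u_1, u_2, z_1, z_2; z_1 adjacent to u_3, u_4; z_2 adjacent to u_3, u_5; and no other edges, is triangle-free and satisfies χ_1(G_5) = 3. -/
import Mathlib


open SimpleGraph

/-- A set `U` is `k`-independent in `G` if every vertex of `U` has at most `k`
neighbours inside `U` (i.e. the induced subgraph has maximum degree at most `k`). -/
def KIndep {V : Type*} (G : SimpleGraph V) (k : ℕ) (U : Set V) : Prop :=
  ∀ v ∈ U, {w | w ∈ U ∧ G.Adj v w}.ncard ≤ k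

/-- `G` is `(m,k)`-colourable: the vertices can be coloured with `m` colours so that
every colour class is `k`-independent. -/
def DefColorable {V : Type*} (G : SimpleGraph V) (m k : ℕ) : Prop :=
  ∃ c : V → Fin m, ∀ i : Fin m, KIndep G k {v | c v = i}

/-- The `k`-defective chromatic number: the least `m` such that `G` is `(m,k)`-colourable. -/
noncomputable def defChrom {V : Type*} (G : SimpleGraph V) (k : ℕ) : ℕ :=
  sInf {m | DefColorable G m k}

/-- The graph `G₅` on 10 vertices: `0 = u`, `1 = v`, `2,…,6 = u₁,…,u₅`, `7 = z`,
`8 = z₁`, `9 = z₂`. -/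
def GraphG5 : SimpleGraph (Fin 10) :=
  SimpleGraph.fromRel (fun a b =>
    (a = 0 ∧ b ∈ ({2, 3, 4, 5, 6} : Set (Fin 10))) ∨
    (a = 1 ∧ b ∈ ({2, 3, 4, 5, 6} : Set (Fin 10))) ∨
    (a = 7 ∧ b ∈ ({2, 3, 8, 9} : Set (Fin 10))) ∨
    (a = 8 ∧ b ∈ ({4, 5} : Set (Fin 10))) ∨
    (a = 9 ∧ b ∈ ({4, 6} : Set (Fin 10))))

def rel' (a b : Fin 10) : Prop :=
  (a = 0 ∧ (b = 2 ∨ b = 3 ∨ b = 4 ∨ b = 5 ∨ b = 6)) ∨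
  (a = 1 ∧ (b = 2 ∨ b = 3 ∨ b = 4 ∨ b = 5 ∨ b = 6)) ∨
  (a = 7 ∧ (b = 2 ∨ b = 3 ∨ b = 8 ∨ b = 9)) ∨
  (a = 8 ∧ (b = 4 ∨ b = 5)) ∨
  (a = 9 ∧ (b = 4 ∨ b = 6))

instance decRel' : DecidableRel rel' := fun _ _ => by unfold rel'; infer_instance

instance instDecAdj : DecidableRel GraphG5.Adj := fun a b =>
  decidable_of_iff (a ≠ b ∧ (rel' a b ∨ rel' b a)) (by
    rw [GraphG5, fromRel_adj]
    unfold rel'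
    simp only [Set.mem_insert_iff, Set.mem_singleton_iff])

lemma ncard_filter (p : Fin 10 → Prop) [DecidablePred p] :
    {w | p w}.ncard = (Finset.univ.filter p).card := by
  rw [← Set.ncard_coe_finset]
  congr 1
  ext w
  simp

lemma kIndep_iff (k : ℕ) (p : Fin 10 → Prop) [DecidablePred p] :
    KIndep GraphG5 k {v | p v} ↔
      ∀ v, p v → (Finset.univ.filter (fun w => p w ∧ GraphG5.Adj v w)).card ≤ k := by
  unfold KIndep
  simp only [Set.mem_setOf_eq]
  refine forall₂_congr fun v _ => ?_
  rw [ncard_filter]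

lemma defColorable_iff (m k : ℕ) :
    DefColorable GraphG5 m k ↔ ∃ c : Fin 10 → Fin m, ∀ i : Fin m, ∀ v, c v = i →
      (Finset.univ.filter (fun w => c w = i ∧ GraphG5.Adj v w)).card ≤ k := by
  unfold DefColorable
  refine exists_congr fun c => forall_congr' fun i => ?_
  exact kIndep_iff k (fun v => c v = i)

lemma upper : DefColorable GraphG5 3 1 := by
  rw [defColorable_iff]
  refine ⟨![0, 0, 1, 2, 1, 2, 2, 1, 0, 0], ?_⟩
  decide

lemma key : ∀ b0 b1 b2 b3 b4 b5 b6 b7 b8 b9 : Fin 2,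
    ¬ (∀ i : Fin 2, ∀ v, (![b0,b1,b2,b3,b4,b5,b6,b7,b8,b9]) v = i →
      (Finset.univ.filter (fun w => (![b0,b1,b2,b3,b4,b5,b6,b7,b8,b9]) w = i ∧
        GraphG5.Adj v w)).card ≤ 1) := by decide

lemma lower : ¬ DefColorable GraphG5 2 1 := by
  rw [defColorable_iff]
  rintro ⟨c, hc⟩
  have hce : c = ![c 0, c 1, c 2, c 3, c 4, c 5, c 6, c 7, c 8, c 9] := by
    funext v; fin_cases v <;> rfl
  rw [hce] at hc
  exact key (c 0) (c 1) (c 2) (c 3) (c 4) (c 5) (c 6) (c 7) (c 8) (c 9) hc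

lemma mono {V : Type*} (G : SimpleGraph V) {m m' k : ℕ} (h : m ≤ m')
    (hc : DefColorable G m k) : DefColorable G m' k := by
  obtain ⟨c, hc⟩ := hc
  refine ⟨fun v => Fin.castLE h (c v), fun i => ?_⟩
  by_cases hi : ∃ j : Fin m, Fin.castLE h j = i
  · obtain ⟨j, rfl⟩ := hi
    have : {v | Fin.castLE h (c v) = Fin.castLE h j} = {v | c v = j} := by
      ext v; simp [Fin.castLE_inj]
    rw [this]
    exact hc j
  · have : {v | Fin.castLE h (c v) = i} = ∅ := by
      ext v; simp only [Set.mem_setOf_eq, Set.mem_empty_iff_false, iff_false]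
      exact fun hv => hi ⟨c v, hv⟩
    rw [this]
    intro v hv
    simp at hv

/-- G₅ is triangle-free and has 1-defective chromatic number 3. -/
theorem stmt12 : GraphG5.CliqueFree 3 ∧ defChrom GraphG5 1 = 3 := by
  constructor
  · intro s hs
    rw [is3Clique_iff] at hs
    obtain ⟨a, b, c, hab, hac, hbc, -⟩ := hs
    revert hab hac hbc
    revert a b c
    decide
  · refine le_antisymm (Nat.sInf_le upper) (le_csInf ⟨3, upper⟩ fun m hm => ?_)
    by_contra h
    push_neg at h
    exact lower (mono GraphG5 (by omega) hm)
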